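/- Let τ = (1 + √5)/2 and λ_k = (⌈k/τ⌉ + kτ)/τ² for k ∈ ℤ. For n ≥ 1 and k ∈ ℤ let w_k : {0, …, n−1} → ℝ be the n-letter word w_k(i) = λ_{k+i+1} − λ_{k+i}. Then the set { w_k : k ∈ ℤ } has exactly n + 1 elements (the Fibonacci chain is Sturmian with minimal complexity: there are exactly n+1 distinct n-letter words). -/

import Mathlib

open MeasureTheory Set Filter

noncomputable section

/-- The golden mean `τ = (1 + √5)/2`. -/
def tau : ℝ := (1 + Real.sqrt 5) / 2

/-- The cut-and-project model set `Σ^Ω = { a + bτ : a, b ∈ ℤ, a - b/τ ∈ Ω }`. -/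
def SigmaSet (Ω : Set ℝ) : Set ℝ :=
  {x | ∃ a b : ℤ, x = (a : ℝ) + (b : ℝ) * tau ∧ (a : ℝ) - (b : ℝ) / tau ∈ Ω}

/-- The increasing enumeration `λ_k = (⌈k/τ⌉ + kτ)/τ²` of the rescaled Fibonacci
chain `Σ^{[0,τ²)}`. -/
def fibChain (k : ℤ) : ℝ := ((⌈(k : ℝ) / tau⌉ : ℝ) + (k : ℝ) * tau) / tau ^ 2

/-!
Writing `u_k = ⌈k/τ⌉ - k/τ ∈ [0, 1)`, one has
`λ_{k+m} - λ_k = (⌈(k+m)/τ⌉ - ⌈k/τ⌉ + mτ)/τ²` and `⌈(k+m)/τ⌉ - ⌈k/τ⌉ = ⌊m/τ⌋ + [u_k < {m/τ}]`.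
So the `n`-letter word at `k` is determined by, and determines, which of the points `{m/τ}`,
`0 ≤ m ≤ n`, lie above `u_k`. These `n + 1` points are distinct since `τ` is irrational, and each
of them is itself attained (`u_{-m} = {m/τ}`), so the `u_k` realise exactly `n + 1` such cuts.
-/

def gapWord {G : Type*} [AddCommGroup G] (f : ℤ → G) (n : ℕ) (k : ℤ) : Fin n → G :=
  fun i => f (k + (i.1 : ℤ) + 1) - f (k + (i.1 : ℤ))

theorem gapWord_eq_gapWord_iff {G : Type*} [AddCommGroup G] (f : ℤ → G) (n : ℕ) (k k' : ℤ) :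
    gapWord f n k = gapWord f n k' ↔
      ∀ m ≤ n, f (k + m) - f k = f (k' + m) - f k' := by
  constructor
  · intro h m hm
    induction m with
    | zero => simp
    | succ m ih =>
      have hi := congrFun h ⟨m, hm⟩
      simp only [gapWord] at hi
      push_cast
      rw [← add_assoc, ← add_assoc, ← sub_add_sub_cancel _ (f (k + m)),
        ← sub_add_sub_cancel (f (k' + m + 1)) (f (k' + m)), hi, ih (by omega)]
  · intro h
    funext i
    have hsucc := h (i.1 + 1) i.2
    have hi := h i.1 i.2.le
    push_cast at hsucc
    simp only [gapWord, ← add_assoc] at hsucc ⊢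
    rw [← sub_sub_sub_cancel_right _ _ (f k), hsucc, hi, sub_sub_sub_cancel_right]

theorem ncard_range_eq_of_eq_iff {ι α β : Type*} {f : ι → α} {g : ι → β}
    (hfg : ∀ i j, f i = f j ↔ g i = g j) : (range f).ncard = (range g).ncard := by
  refine ncard_congr (fun a ha => g ha.choose) (fun a ha => mem_range_self _) ?_ ?_
  · intro a b ha hb h
    rw [← ha.choose_spec, ← hb.choose_spec]
    exact (hfg _ _).mpr h
  · rintro _ ⟨i, rfl⟩
    refine ⟨f i, mem_range_self i, (hfg _ _).mp (mem_range_self i).choose_spec⟩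

theorem Finset.injOn_filter_lt {α : Type*} [LinearOrder α] (P : Finset α) :
    InjOn (fun u => {p ∈ P | u < p}) P := by
  intro p hp q hq h
  by_contra hne
  wlog hlt : p < q generalizing p q
  · exact this hq hp h.symm (Ne.symm hne) (lt_of_le_of_ne (not_lt.mp hlt) (Ne.symm hne))
  have hmem : q ∈ {x ∈ P | p < x} := Finset.mem_filter.mpr ⟨hq, hlt⟩
  simp only at h
  rw [h] at hmem
  exact lt_irrefl q (Finset.mem_filter.mp hmem).2

theorem Finset.ncard_image_filter_lt {α : Type*} [LinearOrder α] (P : Finset α) (U : Set α)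
    (hPU : ↑P ⊆ U) (hU : ∀ u ∈ U, ∃ p ∈ P, p ≤ u) :
    ((fun u => {p ∈ P | u < p}) '' U).ncard = P.card := by
  have himage : (fun u => {p ∈ P | u < p}) '' U = (fun u => {p ∈ P | u < p}) '' P := by
    refine Set.Subset.antisymm ?_ (Set.image_mono hPU)
    rintro _ ⟨u, hu, rfl⟩
    have hne : ({p ∈ P | p ≤ u}).Nonempty := by
      obtain ⟨p, hp, hpu⟩ := hU u hu
      exact ⟨p, Finset.mem_filter.mpr ⟨hp, hpu⟩⟩
    set p := ({p ∈ P | p ≤ u}).max' hne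
    have hp := Finset.mem_filter.mp (Finset.max'_mem _ hne)
    refine ⟨p, hp.1, Finset.filter_congr fun q hq => ⟨fun hpq => ?_, fun huq => hp.2.trans_lt huq⟩⟩
    by_contra! hqu
    exact hpq.not_ge (Finset.le_max' _ q (Finset.mem_filter.mpr ⟨hq, hqu⟩))
  rw [himage, P.injOn_filter_lt.ncard_image, ncard_coe_finset]

theorem Int.ceil_add_sub_ceil {R : Type*} [Field R] [LinearOrder R] [IsStrictOrderedRing R]
    [FloorRing R] (x y : R) :
    ⌈x + y⌉ - ⌈x⌉ = ⌊y⌋ + if (⌈x⌉ - x) < Int.fract y then 1 else 0 := by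
  have hx₀ := Int.le_ceil x
  have hx₁ := Int.ceil_lt_add_one x
  have hy₀ := Int.floor_le y
  have hy₁ := Int.lt_floor_add_one y
  rw [show x + y = y - (⌈x⌉ - x) + ⌈x⌉ by ring, Int.ceil_add_intCast, add_sub_cancel_right,
    Int.ceil_eq_iff, Int.fract]
  split_ifs <;> push_cast <;> constructor <;> linarith

theorem tau_pos : 0 < tau := Real.goldenRatio_pos

def phase (k : ℤ) : ℝ := ⌈(k : ℝ) / tau⌉ - (k : ℝ) / tau

theorem phase_nonneg (k : ℤ) : 0 ≤ phase k :=
  sub_nonneg.mpr (Int.le_ceil _)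

theorem phase_neg_natCast (m : ℕ) : phase (-m) = Int.fract (m / tau) := by
  rw [phase, Int.fract, Int.cast_neg, neg_div, Int.ceil_neg]
  push_cast
  ring

theorem injective_fract_natCast_div_tau :
    Function.Injective fun m : ℕ => Int.fract (m / tau) := by
  intro m m' h
  obtain ⟨z, hz⟩ := Int.fract_eq_fract.mp h
  by_contra hne
  have hirr : Irrational (((m : ℤ) - m' : ℤ) * tau⁻¹) :=
    Real.goldenRatio_irrational.inv.intCast_mul (by omega)
  refine hirr.ne_int z ?_
  rw [← hz]
  push_cast
  ring

theorem fibChain_add_natCast_sub (k : ℤ) (m : ℕ) :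
    fibChain (k + m) - fibChain k =
      ((⌊(m : ℝ) / tau⌋ + if phase k < Int.fract (m / tau) then 1 else 0 : ℤ) + m * tau) /
        tau ^ 2 := by
  rw [phase, ← Int.ceil_add_sub_ceil, ← add_div, fibChain, fibChain]
  push_cast
  ring

theorem fibChain_add_natCast_sub_eq_iff (k k' : ℤ) (m : ℕ) :
    fibChain (k + m) - fibChain k = fibChain (k' + m) - fibChain k' ↔
      (phase k < Int.fract (m / tau) ↔ phase k' < Int.fract (m / tau)) := by
  rw [fibChain_add_natCast_sub, fibChain_add_natCast_sub,
    div_left_inj' (pow_ne_zero 2 tau_pos.ne'), add_left_inj, Int.cast_inj,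
    add_right_inj]
  by_cases h : phase k < Int.fract (m / tau) <;> by_cases h' : phase k' < Int.fract (m / tau) <;>
    simp [h, h']

theorem statement14_general (n : ℕ) :
    {w : Fin n → ℝ | ∃ k : ℤ,
        w = fun i : Fin n =>
          fibChain (k + (i.1 : ℤ) + 1) - fibChain (k + (i.1 : ℤ))}.ncard = n + 1 := by
  set P : Finset ℝ := (Finset.range (n + 1)).image fun m : ℕ => Int.fract (m / tau)
  set cut : ℝ → Finset ℝ := fun u => {p ∈ P | u < p}
  have hword : ∀ k k', gapWord fibChain n k = gapWord fibChain n k' ↔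
      cut (phase k) = cut (phase k') := by
    intro k k'
    simp only [gapWord_eq_gapWord_iff, fibChain_add_natCast_sub_eq_iff, cut, Finset.filter_inj',
      P, Finset.forall_mem_image, Finset.mem_range, Nat.lt_succ_iff]
  have hPU : ↑P ⊆ range phase := by
    simp only [P, Finset.coe_image, image_subset_iff]
    exact fun m _ => ⟨-m, phase_neg_natCast m⟩
  have hmin : ∀ u ∈ range phase, ∃ p ∈ P, p ≤ u := by
    rintro _ ⟨k, rfl⟩
    exact ⟨0, Finset.mem_image.mpr ⟨0, by simp⟩, phase_nonneg k⟩
  calc _ = (range (gapWord fibChain n)).ncard := by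
        congr 1; ext w; exact exists_congr fun _ => eq_comm
    _ = (cut '' range phase).ncard := by
        rw [← range_comp]; exact ncard_range_eq_of_eq_iff hword
    _ = n + 1 := by
        rw [P.ncard_image_filter_lt _ hPU hmin,
          Finset.card_image_of_injective _ injective_fract_natCast_div_tau, Finset.card_range]

/-- the Fibonacci chain has exactly `n + 1` distinct `n`-letter words
(Sturmian minimal complexity). -/
theorem statement14 (n : ℕ) (hn : 1 ≤ n) :
    {w : Fin n → ℝ | ∃ k : ℤ,
        w = fun i : Fin n =>
          fibChain (k + (i.1 : ℤ) + 1) - fibChain (k + (i.1 : ℤ))}.ncard = n + 1 :=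
  statement14_general n
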